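/- arXiv:1807.04267 — 4 statements merged into one kernel-verified Lean document; each statement's English description precedes it below -/
import Mathlib

section
/- Let m ≥ 2 be an integer, let φ be a real number, and set n = 2^m − 1 and φ_m = 2^{m−1}·φ. Then the following identity of complex numbers holds: 1 + n·exp(−i·φ_m) = exp(−i·(φ − 2·arctan( sin(φ_m) / (n + cos(φ_m)) ))) · ( exp(−i·n·φ) + n·exp(−i·(φ_m − φ)) ). (This is the exact phase relation underlying Lemma 1: post-selected transversal application of R_z(−φ) on the quantum Reed–Muller code QRM(1,m) produces, up to a global phase, a logical Z-rotation by φ' = φ − 2·arctan( sin(φ_m) / (2^m − 1 + cos(φ_m)) ), where the logical |0⟩ amplitude acquires the factor 1 + n·exp(−i·φ_m) and the logical |1⟩ amplitude acquires the factor exp(−i·n·φ) + n·exp(−i·(φ_m − φ)).) -/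
/-!
Put `n = 2^m - 1`, `ψ = 2^(m-1) φ` and `u = exp(-iψ)`, so that `n φ = 2ψ - φ`. Then
`1 + n u = u (n + ū)`, while the second factor is `exp(iφ) u (u + n)`. The identity thus
reduces to `z = exp(2iθ) · z̄` for `z = n + exp(iψ)` and `θ = arctan (Im z / Re z)`, i.e. to
`z / z̄ = (1 + i tan θ) / (1 - i tan θ)`, which is the logarithmic formula for the complex
arctangent; it needs only `Re z = n + cos ψ ≠ 0`, guaranteed by `n ≥ 3`.
-/

open Complex Real

namespace Complex
open ComplexConjugate

theorem exp_two_mul_arctan_mul_I (x : ℝ) :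
    exp (2 * Real.arctan x * I) = (1 + x * I) / (1 - x * I) := by
  have hne : (1 + x * I) / (1 - x * I) ≠ 0 := by
    refine div_ne_zero ?_ ?_ <;> intro h <;> simpa using congrArg re h
  set w := (1 + x * I) / (1 - x * I)
  have hI : 2 * (-I / 2 * log w) * I = log w := by
    ring_nf; rw [I_sq]; ring
  rw [ofReal_arctan, arctan, hI, exp_log hne]

theorem eq_exp_two_mul_arctan_mul_I_mul_conj {z : ℂ} (hz : z.re ≠ 0) :
    z = exp (2 * Real.arctan (z.im / z.re) * I) * conj z := by
  obtain ⟨a, b, rfl⟩ : ∃ a b : ℝ, z = a + b * I := ⟨_, _, (re_add_im z).symm⟩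
  simp only [add_re, ofReal_re, mul_re, I_re, mul_zero, ofReal_im, I_im, mul_one, sub_self,
    add_zero, add_im, mul_im, zero_add] at hz ⊢
  have ha : (a : ℂ) ≠ 0 := ofReal_ne_zero.mpr hz
  have hconj : (a : ℂ) - b * I ≠ 0 := by
    intro h; exact hz (by simpa using congrArg re h)
  have hexp : (1 + (b / a : ℝ) * I) / (1 - (b / a : ℝ) * I) = (a + b * I) / (a - b * I) := by
    rw [ofReal_div, ← mul_div_mul_left _ _ ha]
    congr 1 <;> field_simp
  rw [exp_two_mul_arctan_mul_I, hexp, map_add, map_mul, conj_ofReal, conj_ofReal, conj_I,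
    mul_neg, ← sub_eq_add_neg, div_mul_cancel₀ _ hconj]

theorem ofReal_add_exp_mul_I_eq_exp_arctan_mul {n ψ : ℝ} (h : n + Real.cos ψ ≠ 0) :
    n + exp (ψ * I) =
      exp (2 * Real.arctan (Real.sin ψ / (n + Real.cos ψ)) * I) * (n + exp (-ψ * I)) := by
  have key := eq_exp_two_mul_arctan_mul_I_mul_conj (z := n + exp (ψ * I))
    (by simpa [exp_ofReal_mul_I_re] using h)
  simpa [exp_ofReal_mul_I_re, exp_ofReal_mul_I_im, ← exp_conj] using key

theorem one_add_mul_exp_eq_exp_mul_add {n ψ : ℝ} (φ : ℝ) (h : n + Real.cos ψ ≠ 0) :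
    1 + n * exp (-I * ψ) =
      exp (-I * ((φ - 2 * Real.arctan (Real.sin ψ / (n + Real.cos ψ)) : ℝ) : ℂ)) *
        (exp (-I * ((2 * ψ - φ : ℝ) : ℂ)) + n * exp (-I * ((ψ - φ : ℝ) : ℂ))) := by
  set θ := Real.arctan (Real.sin ψ / (n + Real.cos ψ))
  have key : n + exp (ψ * I) = exp (2 * θ * I) * (n + exp (-ψ * I)) :=
    ofReal_add_exp_mul_I_eq_exp_arctan_mul h
  have hψ : exp (-ψ * I) * exp (ψ * I) = 1 := by rw [← exp_add]; simp
  have hφ : exp (-φ * I) * exp (φ * I) = 1 := by rw [← exp_add]; simp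
  have e1 : -I * ((φ - 2 * θ : ℝ) : ℂ) = -φ * I + 2 * θ * I := by push_cast; ring
  have e2 : -I * ((2 * ψ - φ : ℝ) : ℂ) = -ψ * I + -ψ * I + φ * I := by push_cast; ring
  have e3 : -I * ((ψ - φ : ℝ) : ℂ) = -ψ * I + φ * I := by push_cast; ring
  have e4 : -I * (ψ : ℂ) = -ψ * I := by ring
  rw [e1, e2, e3, e4]
  simp only [exp_add]
  linear_combination exp (-ψ * I) * key - hψ -
    exp (2 * θ * I) * exp (-ψ * I) * (exp (-ψ * I) + n) * hφ

end Complex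

/-- The exact phase relation underlying Lemma 1 (post-selected transversal
`R_z(−φ)` on QRM(1,m) yields a logical Z-rotation by
`φ' = φ − 2·arctan(sin φ_m / (2^m − 1 + cos φ_m))`). -/
theorem qrm_logical_phase_relation (m : ℕ) (hm : 2 ≤ m) (φ : ℝ) :
    (1 : ℂ) + ((2 ^ m - 1 : ℝ) : ℂ) *
        Complex.exp (-Complex.I * ((2 ^ (m - 1) * φ : ℝ) : ℂ)) =
      Complex.exp (-Complex.I *
          ((φ - 2 * Real.arctan (Real.sin (2 ^ (m - 1) * φ) /
            ((2 ^ m - 1) + Real.cos (2 ^ (m - 1) * φ))) : ℝ) : ℂ)) *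
        (Complex.exp (-Complex.I * (((2 ^ m - 1 : ℝ) * φ : ℝ) : ℂ)) +
          ((2 ^ m - 1 : ℝ) : ℂ) *
            Complex.exp (-Complex.I * ((2 ^ (m - 1) * φ - φ : ℝ) : ℂ))) := by
  have hpow : (2 : ℝ) ^ m = 2 * 2 ^ (m - 1) := by
    rw [← pow_succ', Nat.sub_add_cancel (by omega)]
  have hfour : (4 : ℝ) ≤ 2 ^ m :=
    calc (4 : ℝ) = 2 ^ 2 := by norm_num
      _ ≤ 2 ^ m := pow_le_pow_right₀ (by norm_num) hm
  have hpos : (2 ^ m - 1 : ℝ) + Real.cos (2 ^ (m - 1) * φ) ≠ 0 := by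
    linarith [Real.neg_one_le_cos (2 ^ (m - 1) * φ)]
  have hnφ : (2 ^ m - 1 : ℝ) * φ = 2 * (2 ^ (m - 1) * φ) - φ := by
    rw [hpow]; ring
  rw [hnφ]
  exact one_add_mul_exp_eq_exp_mul_add φ hpos
end

section
/- Let γ ∈ (0, π/2), let φ ∈ [0, π], and set p = cos²(φ/2). Suppose p̂ ∈ [0,1] satisfies |p̂ − p| < (sin γ)/2, and let φ̂ = arccos(2·p̂ − 1) ∈ [0, π]. Then: (i) if φ̂ < π/2 − γ then φ < π/2, and (ii) if φ̂ > π/2 + γ then φ > π/2. (Correctness of the bit-decision rule in the Rudolph–Grover estimator: if the empirical estimate φ̂ of the accumulated phase lands outside the excluded band of half-width γ around π/2, the inferred bit is correct whenever the empirical frequency p̂ is within δ(γ) = (sin γ)/2 of the true outcome probability.) -/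
open Real

/-- Correctness of the bit-decision rule of the Rudolph–Grover estimator:
if the empirical frequency `phat` is within `(sin γ)/2` of the true outcome
probability `p = cos²(φ/2)`, and the angle estimate
`arccos (2·phat − 1)` lands outside the excluded band of half-width `γ`
around `π/2`, then the inferred bit is correct. -/
theorem rg_bit_decision_correct (γ φ : ℝ)
    (hγ : γ ∈ Set.Ioo 0 (π / 2)) (hφ : φ ∈ Set.Icc 0 π)
    (phat : ℝ) (hphat : phat ∈ Set.Icc (0 : ℝ) 1)
    (hclose : |phat - Real.cos (φ / 2) ^ 2| < Real.sin γ / 2) :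
    (Real.arccos (2 * phat - 1) < π / 2 - γ → φ < π / 2) ∧
      (Real.arccos (2 * phat - 1) > π / 2 + γ → φ > π / 2) := by
  obtain ⟨hγ0, hγ2⟩ := hγ
  obtain ⟨hφ0, hφπ⟩ := hφ
  obtain ⟨hp0, hp1⟩ := hphat
  have hx1 : (-1 : ℝ) ≤ 2 * phat - 1 := by linarith
  have hx2 : 2 * phat - 1 ≤ 1 := by linarith
  have hcos : Real.cos φ = 2 * Real.cos (φ / 2) ^ 2 - 1 := by
    have h2 : 2 * (φ / 2) = φ := by ring
    have := Real.cos_sq (φ / 2)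
    rw [h2] at this
    linarith
  have hkey : |(2 * phat - 1) - Real.cos φ| < Real.sin γ := by
    rw [hcos]
    have : (2 * phat - 1) - (2 * Real.cos (φ / 2) ^ 2 - 1)
        = 2 * (phat - Real.cos (φ / 2) ^ 2) := by ring
    rw [this, abs_mul]
    rw [abs_of_nonneg (by norm_num : (0:ℝ) ≤ 2)]
    linarith
  have habs := abs_lt.mp hkey
  constructor
  · intro h
    rw [Real.arccos_eq_pi_div_two_sub_arcsin] at h
    have hγlt : γ < Real.arcsin (2 * phat - 1) := by linarith
    have hsin : Real.sin γ < 2 * phat - 1 := by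
      have := Real.sin_lt_sin_of_lt_of_le_pi_div_two (by linarith [Real.neg_pi_div_two_le_arcsin (2*phat-1)] : -(π/2) ≤ γ) (Real.arcsin_le_pi_div_two _) hγlt
      rwa [Real.sin_arcsin hx1 hx2] at this
    have hcosφ : 0 < Real.cos φ := by linarith
    by_contra hle
    push_neg at hle
    have := Real.cos_nonpos_of_pi_div_two_le_of_le hle (by linarith [Real.pi_pos])
    linarith
  · intro h
    rw [Real.arccos_eq_pi_div_two_sub_arcsin] at h
    have hγlt : Real.arcsin (2 * phat - 1) < -γ := by linarith
    have hsin : 2 * phat - 1 < Real.sin (-γ) := by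
      have := Real.sin_lt_sin_of_lt_of_le_pi_div_two (Real.neg_pi_div_two_le_arcsin _) (by linarith : -γ ≤ π/2) hγlt
      rwa [Real.sin_arcsin hx1 hx2] at this
    rw [Real.sin_neg] at hsin
    have hcosφ : Real.cos φ < 0 := by linarith
    by_contra hle
    push_neg at hle
    have := Real.cos_nonneg_of_mem_Icc ⟨by linarith, hle⟩
    linarith
end

section
/- Fix an integer m ≥ 2 and set a = 2^{m−1}, n = 2^m − 1. Define, for p ∈ [0,1], N(p) = (2^m − 1)(1−p)^a p^{a−1} + (2^m − 1)(1−p)^{a−1} p^a + p^n and f(p) = N(p) / ( (1−p)^n + N(p) ). Then f is strictly monotonically increasing on [0, 1]. (Monotonicity of the X-error-detection failure probability p^X_err of Eqn. (13) as a function of the physical error probability p, which justifies replacing the single-qubit X-error probability p(p_x + p_y) by p to obtain an upper bound valid for all p_x, p_y.) -/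
private lemma pXerr_key (c : ℝ) (hc : 0 ≤ c) (b : ℕ) :
    StrictMonoOn
      (fun p : ℝ =>
        (c * (1 - p) ^ (b + 2) * p ^ (b + 1) +
            c * (1 - p) ^ (b + 1) * p ^ (b + 2) +
            p ^ (2 * b + 3)) /
          ((1 - p) ^ (2 * b + 3) +
            (c * (1 - p) ^ (b + 2) * p ^ (b + 1) +
              c * (1 - p) ^ (b + 1) * p ^ (b + 2) +
              p ^ (2 * b + 3))))
      (Set.Icc 0 1) := by
  set N : ℝ → ℝ := fun p =>
    c * (1 - p) ^ (b + 2) * p ^ (b + 1) + c * (1 - p) ^ (b + 1) * p ^ (b + 2) +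
      p ^ (2 * b + 3) with hN
  set D : ℝ → ℝ := fun p => (1 - p) ^ (2 * b + 3) with hD
  have hNnonneg : ∀ x ∈ Set.Icc (0:ℝ) 1, 0 ≤ N x := by
    intro x hx
    obtain ⟨hx0, hx1⟩ := hx
    have h1 : (0:ℝ) ≤ 1 - x := by linarith
    have := pow_nonneg h1
    have := pow_nonneg hx0
    positivity
  have hDN : ∀ x ∈ Set.Icc (0:ℝ) 1, 0 < D x + N x := by
    intro x hx
    obtain ⟨hx0, hx1⟩ := hx
    rcases lt_or_eq_of_le hx1 with h | h
    · have hD0 : 0 < D x := pow_pos (by linarith) _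
      have := hNnonneg x ⟨hx0, hx1⟩
      linarith
    · subst h
      simp [hD, hN]
  intro p hp q hq hpq
  simp only
  rw [div_lt_div_iff₀ (hDN p hp) (hDN q hq)]
  obtain ⟨hp0, hp1⟩ := hp
  obtain ⟨hq0, hq1⟩ := hq
  have key : N p * D q < N q * D p := by
    set s : ℝ := p * (1 - q) with hs
    set t : ℝ := q * (1 - p) with ht
    have hs0 : 0 ≤ s := mul_nonneg hp0 (by linarith)
    have hst : s < t := by
      have : t - s = q - p := by ring
      nlinarith
    have hw : (0:ℝ) ≤ (1 - p) * (1 - q) :=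
      mul_nonneg (by linarith) (by linarith)
    have h1 : s ^ (b + 1) ≤ t ^ (b + 1) := pow_le_pow_left₀ hs0 hst.le _
    have h2 : s ^ (b + 2) ≤ t ^ (b + 2) := pow_le_pow_left₀ hs0 hst.le _
    have h3 : s ^ (2 * b + 3) < t ^ (2 * b + 3) :=
      pow_lt_pow_left₀ hst hs0 (by omega)
    set w : ℝ := (1 - p) * (1 - q) with hwdef
    have e1 : N p * D q =
        c * w ^ (b + 2) * s ^ (b + 1) + c * w ^ (b + 1) * s ^ (b + 2) +
          s ^ (2 * b + 3) := by
      simp only [hN, hD, hs, hwdef, mul_pow]; ring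
    have e2 : N q * D p =
        c * w ^ (b + 2) * t ^ (b + 1) + c * w ^ (b + 1) * t ^ (b + 2) +
          t ^ (2 * b + 3) := by
      simp only [hN, hD, ht, hwdef, mul_pow]; ring
    rw [e1, e2]
    have hcw1 : 0 ≤ c * w ^ (b + 2) := mul_nonneg hc (pow_nonneg hw _)
    have hcw2 : 0 ≤ c * w ^ (b + 1) := mul_nonneg hc (pow_nonneg hw _)
    have := mul_le_mul_of_nonneg_left h1 hcw1
    have := mul_le_mul_of_nonneg_left h2 hcw2
    linarith
  have hcomm : N p * N q = N q * N p := mul_comm _ _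
  calc N p * (D q + N q) = N p * D q + N p * N q := by ring
    _ < N q * D p + N q * N p := by linarith
    _ = N q * (D p + N p) := by ring

/-- Monotonicity of the X-error-detection failure probability
`p^X_err = N(p) / ((1−p)^n + N(p))` of Eqn. (13), where for `a = 2^{m−1}` and
`n = 2^m − 1`,
`N(p) = (2^m − 1)(1−p)^a p^{a−1} + (2^m − 1)(1−p)^{a−1} p^a + p^n`:
this function of the physical error probability `p` is strictly increasing on
`[0, 1]`. -/
theorem pXerr_strictMonoOn (m : ℕ) (hm : 2 ≤ m) :
    StrictMonoOn
      (fun p : ℝ =>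
        ((2 ^ m - 1 : ℝ) * (1 - p) ^ (2 ^ (m - 1)) * p ^ (2 ^ (m - 1) - 1) +
            (2 ^ m - 1 : ℝ) * (1 - p) ^ (2 ^ (m - 1) - 1) * p ^ (2 ^ (m - 1)) +
            p ^ (2 ^ m - 1)) /
          ((1 - p) ^ (2 ^ m - 1) +
            ((2 ^ m - 1 : ℝ) * (1 - p) ^ (2 ^ (m - 1)) * p ^ (2 ^ (m - 1) - 1) +
              (2 ^ m - 1 : ℝ) * (1 - p) ^ (2 ^ (m - 1) - 1) * p ^ (2 ^ (m - 1)) +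
              p ^ (2 ^ m - 1))))
      (Set.Icc 0 1) := by
  have ha : 2 ≤ 2 ^ (m - 1) := by
    calc (2:ℕ) = 2 ^ 1 := (pow_one 2).symm
      _ ≤ 2 ^ (m - 1) := Nat.pow_le_pow_right (by norm_num) (by omega)
  obtain ⟨b, hb⟩ : ∃ b, 2 ^ (m - 1) = b + 2 := ⟨2 ^ (m - 1) - 2, by omega⟩
  have hm2 : 2 ^ m = 2 * b + 4 := by
    have : 2 ^ m = 2 * 2 ^ (m - 1) := by
      rw [← pow_succ']
      congr 1
      omega
    omega
  have e1 : 2 ^ (m - 1) - 1 = b + 1 := by omega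
  have e2 : 2 ^ m - 1 = 2 * b + 3 := by omega
  have hc : (0:ℝ) ≤ (2 ^ m - 1 : ℝ) := by
    have : (1:ℝ) ≤ 2 ^ m := one_le_pow₀ one_le_two
    linarith
  simp only [hb, e1, e2]
  exact pXerr_key _ hc b
end

section
/- Let m ≥ 1 and let f be a polynomial over ZMod 2 in m variables of total degree at most 2, regarded as a function (Fin m → ZMod 2) → ZMod 2. Let w = |{ x : f(x) = 1 }| be its weight. Then either w = 2^{m−1}, or there exists an integer h with 0 ≤ h ≤ ⌈m/2⌉ such that w = 2^{m−1} + 2^{m−1−h} or w = 2^{m−1} − 2^{m−1−h}. (Weight structure of the second-order Reed–Muller code RM(2,m): the number A_i of codewords of weight i vanishes unless i = 2^{m−1} or i = 2^{m−1} ± 2^{m−1−h} for some 0 ≤ h ≤ ⌈m/2⌉; note h = 0 gives the weights 0 and 2^m of the constant functions.) -/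
open Finset MvPolynomial

namespace RM2Aux
variable {m : ℕ}

def χ (a : ZMod 2) : ℤ := if a = 0 then 1 else -1

lemma χ_add (a b : ZMod 2) : χ (a + b) = χ a * χ b := by revert a b; decide

lemma zmod2_cases (a : ZMod 2) : a = 0 ∨ a = 1 := by revert a; decide

lemma zmod2_ne (a : ZMod 2) (h : a ≠ 0) : a = 1 := by revert a h; decide

lemma zmod2_ne' (a : ZMod 2) (h : a ≠ 1) : a = 0 := by revert a h; decide

lemma h2 : (2 : ZMod 2) = 0 := by decide

lemma cardV : Fintype.card (Fin m → ZMod 2) = 2 ^ m := by simp [ZMod.card]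

lemma sum_chi_additive (φ : (Fin m → ZMod 2) → ZMod 2)
    (hφ : ∀ x y, φ (x + y) = φ x + φ y) :
    (∑ x, χ (φ x)) = if ∀ x, φ x = 0 then (2 : ℤ) ^ m else 0 := by
  split_ifs with h
  · simp only [h, χ, if_pos rfl, Finset.sum_const, Finset.card_univ, cardV]
    push_cast; ring
  · push_neg at h
    obtain ⟨x0, hx0⟩ := h
    have h1 : φ x0 = 1 := zmod2_ne _ hx0
    have e : (∑ x, χ (φ x)) = ∑ x, χ (φ (x0 + x)) :=
      (Fintype.sum_equiv (Equiv.addLeft x0) _ _ (fun x => rfl)).symm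
    have e2 : ∀ x, χ (φ (x0 + x)) = - χ (φ x) := by
      intro x
      rw [hφ, h1, χ_add]
      have hc1 : χ (1 : ZMod 2) = -1 := by decide
      rw [hc1]; ring
    rw [Finset.sum_congr rfl (fun x _ => e2 x)] at e
    rw [Finset.sum_neg_distrib] at e
    linarith

lemma eval_monomial' {m : ℕ} (s : Fin m →₀ ℕ) (c : ZMod 2) (y : Fin m → ZMod 2) :
    eval y (monomial s c) = c * ∏ i ∈ s.support, y i := by
  rw [eval_monomial, Finsupp.prod]
  congr 1
  apply Finset.prod_congr rfl
  intro i hi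
  rcases zmod2_cases (y i) with h | h <;> rw [h]
  · exact zero_pow (Finsupp.mem_support_iff.mp hi)
  · exact one_pow _

lemma card_support_le {m : ℕ} (s : Fin m →₀ ℕ) : s.support.card ≤ s.sum fun _ e => e := by
  rw [Finsupp.sum]
  calc s.support.card = ∑ _i ∈ s.support, 1 := by simp
    _ ≤ ∑ i ∈ s.support, s i := Finset.sum_le_sum fun i hi =>
        Nat.one_le_iff_ne_zero.mpr (Finsupp.mem_support_iff.mp hi)

lemma key_monomial {m : ℕ} (s : Fin m →₀ ℕ) (c : ZMod 2) (hs : s.support.card ≤ 2)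
    (a b d : Fin m → ZMod 2) :
    eval (a+b+d) (monomial s c) + eval (a+b) (monomial s c) + eval (a+d) (monomial s c)
      + eval (b+d) (monomial s c) + eval a (monomial s c) + eval b (monomial s c)
      + eval d (monomial s c) + eval 0 (monomial s c) = 0 := by
  simp only [eval_monomial']
  obtain h | h | h : s.support.card = 0 ∨ s.support.card = 1 ∨ s.support.card = 2 := by omega
  · rw [Finset.card_eq_zero] at h
    simp only [h, Finset.prod_empty]
    revert c; decide
  · obtain ⟨i, hi⟩ := Finset.card_eq_one.mp h
    simp only [hi, Finset.prod_singleton, Pi.add_apply, Pi.zero_apply]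
    generalize a i = x; generalize b i = y; generalize d i = z
    revert x y z c; decide
  · obtain ⟨i, j, hij, hij2⟩ := Finset.card_eq_two.mp h
    simp only [hij2, Finset.prod_pair hij, Pi.add_apply, Pi.zero_apply]
    generalize a i = x1; generalize b i = y1; generalize d i = z1
    generalize a j = x2; generalize b j = y2; generalize d j = z2
    revert x1 y1 z1 x2 y2 z2 c; decide

lemma key {m : ℕ} (f : MvPolynomial (Fin m) (ZMod 2)) (hf : f.totalDegree ≤ 2)
    (a b d : Fin m → ZMod 2) :
    eval (a+b+d) f + eval (a+b) f + eval (a+d) f + eval (b+d) f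
      + eval a f + eval b f + eval d f + eval 0 f = 0 := by
  conv_lhs => rw [f.as_sum]
  simp only [map_sum]
  rw [← Finset.sum_add_distrib, ← Finset.sum_add_distrib, ← Finset.sum_add_distrib,
    ← Finset.sum_add_distrib, ← Finset.sum_add_distrib, ← Finset.sum_add_distrib,
    ← Finset.sum_add_distrib]
  apply Finset.sum_eq_zero
  intro s hs
  exact key_monomial s (coeff s f) ((card_support_le s).trans ((le_totalDegree hs).trans hf)) a b d

theorem main_aux (m : ℕ) (hm : 1 ≤ m) (F : (Fin m → ZMod 2) → ZMod 2)
    (hKEY : ∀ a b d, F (a+b+d) + F (a+b) + F (a+d) + F (b+d) + F a + F b + F d + F 0 = 0) :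
    (Finset.univ.filter (fun x => F x = 1)).card = 2 ^ (m - 1) ∨
      ∃ h : ℕ, h ≤ Nat.ceil ((m : ℚ) / 2) ∧
        ((Finset.univ.filter (fun x => F x = 1)).card = 2 ^ (m - 1) + 2 ^ (m - 1 - h) ∨
          (Finset.univ.filter (fun x => F x = 1)).card = 2 ^ (m - 1) - 2 ^ (m - 1 - h)) := by
  set w : ℕ := (Finset.univ.filter (fun x => F x = 1)).card with hw
  set S : ℤ := ∑ x, χ (F x) with hSdef
  set L : (Fin m → ZMod 2) → (Fin m → ZMod 2) → ZMod 2 :=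
    fun a x => F (x + a) + F x + F a + F 0 with hLdef
  set g : (Fin m → ZMod 2) → ZMod 2 := fun a => F a + F 0 with hgdef
  -- basic identities
  have hLx : ∀ a x y, L a (x + y) = L a x + L a y := by
    intro a x y
    have hk := hKEY x y a
    simp only [hLdef]
    linear_combination hk - (F (x + a) + F (y + a) + F x + F y + F a + F 0) * h2
  have hLsymm : ∀ a x, L a x = L x a := by
    intro a x; simp only [hLdef]; rw [add_comm x a]; ring
  have hLa : ∀ a b x, L (a + b) x = L a x + L b x := by
    intro a b x
    rw [hLsymm (a + b) x, hLx x a b, hLsymm x a, hLsymm x b]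
  have hL0 : ∀ x, L 0 x = 0 := by
    intro x; simp only [hLdef]
    rw [add_zero]
    linear_combination (F x + F 0) * h2
  have hgadd : ∀ a b, g (a + b) = L b a + g a + g b := by
    intro a b; simp only [hLdef, hgdef]
    linear_combination (-(F a) - F b - F 0) * h2
  -- weight relation
  have hwle : w ≤ 2 ^ m := by
    rw [hw]
    exact le_trans (Finset.card_filter_le _ _) (by rw [Finset.card_univ, cardV])
  have hSw : S = 2 ^ m - 2 * (w : ℤ) := by
    rw [hSdef, ← Finset.sum_filter_add_sum_filter_not Finset.univ (fun x => F x = 1)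
      (fun x => χ (F x))]
    have e1 : ∀ x ∈ Finset.univ.filter (fun x => F x = 1), χ (F x) = -1 := by
      intro x hx
      simp only [Finset.mem_filter] at hx
      rw [hx.2]; decide
    have e2 : ∀ x ∈ Finset.univ.filter (fun x => ¬ F x = 1), χ (F x) = 1 := by
      intro x hx
      simp only [Finset.mem_filter] at hx
      rw [zmod2_ne' _ hx.2]; decide
    rw [Finset.sum_congr rfl e1, Finset.sum_congr rfl e2, Finset.sum_const, Finset.sum_const,
      Finset.filter_not, Finset.card_sdiff_of_subset (Finset.filter_subset _ _), Finset.card_univ, cardV,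
      ← hw]
    simp only [nsmul_eq_mul, mul_one, mul_neg_one, Nat.cast_sub hwle]
    push_cast
    ring
  -- the square of the character sum
  set P : (Fin m → ZMod 2) → Prop := fun a => ∀ x, L a x = 0 with hPdef
  have hSsq : S ^ 2 = ∑ a, χ (g a) * ∑ x, χ (L a x) := by
    calc S ^ 2 = (∑ x, χ (F x)) * ∑ y, χ (F y) := by rw [hSdef, sq]
      _ = ∑ x, ∑ y, χ (F x) * χ (F y) := Finset.sum_mul_sum _ _ _ _
      _ = ∑ x, ∑ y, χ (F x + F y) := by simp_rw [χ_add]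
      _ = ∑ x, ∑ a, χ (F x + F (x + a)) := by
          refine Finset.sum_congr rfl fun x _ => ?_
          exact (Fintype.sum_equiv (Equiv.addLeft x) _ _ fun a => rfl).symm
      _ = ∑ a, ∑ x, χ (F x + F (x + a)) := Finset.sum_comm
      _ = ∑ a, ∑ x, χ (g a + L a x) := by
          refine Finset.sum_congr rfl fun a _ => Finset.sum_congr rfl fun x _ => ?_
          congr 1
          simp only [hLdef, hgdef]
          linear_combination (-(F a) - F 0) * h2
      _ = ∑ a, ∑ x, χ (g a) * χ (L a x) := by simp_rw [χ_add]
      _ = ∑ a, χ (g a) * ∑ x, χ (L a x) := by simp_rw [Finset.mul_sum]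
  have hT : S ^ 2 = 2 ^ m * ∑ a ∈ Finset.univ.filter P, χ (g a) := by
    rw [hSsq]
    have e : ∀ a, χ (g a) * (∑ x, χ (L a x)) = if P a then 2 ^ m * χ (g a) else 0 := by
      intro a
      rw [sum_chi_additive (L a) (hLx a)]
      simp only [hPdef]
      split_ifs <;> ring
    rw [Finset.sum_congr rfl fun a _ => e a, ← Finset.sum_filter, ← Finset.mul_sum]
  -- the radical as a submodule
  set Rad : Submodule (ZMod 2) (Fin m → ZMod 2) :=
    { carrier := {a | ∀ x, L a x = 0}
      add_mem' := by
        intro a b ha hb x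
        rw [hLa, ha x, hb x, add_zero]
      zero_mem' := hL0
      smul_mem' := by
        intro c a ha
        rcases zmod2_cases c with hc | hc <;> subst hc
        · rw [zero_smul]; exact hL0
        · rw [one_smul]; exact ha } with hRadDef
  haveI : Fintype ↥Rad := Fintype.ofFinite _
  set k : ℕ := Module.finrank (ZMod 2) ↥Rad with hkdef
  have hcardRad : Fintype.card ↥Rad = 2 ^ k := by
    rw [Module.card_eq_pow_finrank (K := ZMod 2), ZMod.card]
  have hkm : k ≤ m := by
    have h1 := Submodule.finrank_le Rad
    rwa [Module.finrank_fin_fun] at h1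
  have hmem : ∀ a, P a ↔ a ∈ Rad := fun a => Iff.rfl
  have hfil : (Finset.univ.filter P).card = 2 ^ k := by
    have e1 : Fintype.card {x // P x} = Fintype.card ↥Rad :=
      Fintype.card_congr (Equiv.subtypeEquivRight hmem)
    rw [Fintype.card_subtype] at e1
    rw [← hcardRad, ← e1]
  by_cases hg0 : ∀ a, P a → g a = 0
  · -- Case B : S^2 = 2^(m+k)
    have hTsum : (∑ a ∈ Finset.univ.filter P, χ (g a)) = 2 ^ k := by
      have e : ∀ a ∈ Finset.univ.filter P, χ (g a) = 1 := by
        intro a ha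
        simp only [Finset.mem_filter] at ha
        rw [hg0 a ha.2]; decide
      rw [Finset.sum_congr rfl e, Finset.sum_const, hfil]
      simp
    have hS2 : S ^ 2 = 2 ^ (m + k) := by rw [hT, hTsum, ← pow_add]
    -- extract the power of two
    have hnat : S.natAbs ^ 2 = 2 ^ (m + k) := by
      have h1 : ((S.natAbs ^ 2 : ℕ) : ℤ) = ((2 ^ (m + k) : ℕ) : ℤ) := by
        push_cast
        rw [sq_abs, hS2]
      exact_mod_cast h1
    have hdvd : S.natAbs ∣ 2 ^ (m + k) := ⟨S.natAbs, by rw [← hnat]; ring⟩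
    obtain ⟨j, hjle, hja⟩ := (Nat.dvd_prime_pow Nat.prime_two).mp hdvd
    have hjj : 2 * j = m + k := by
      have : (2 : ℕ) ^ (2 * j) = 2 ^ (m + k) := by
        rw [mul_comm, pow_mul, ← hja]
        exact hnat
      exact Nat.pow_right_injective (le_refl 2) this
    have hj1 : 1 ≤ j := by omega
    have hjm : j ≤ m := by omega
    right
    refine ⟨m - j, ?_, ?_⟩
    · -- ceiling bound
      have h2h : 2 * (m - j) ≤ m := by omega
      have hq : ((m - j : ℕ) : ℚ) ≤ (m : ℚ) / 2 := by
        have hc := (Nat.cast_le (α := ℚ)).mpr h2h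
        push_cast at hc
        linarith
      exact Nat.cast_le.mp (hq.trans (Nat.le_ceil _))
    · rw [show m - 1 - (m - j) = j - 1 by omega]
      have hA : (2 : ℕ) ^ m = 2 * 2 ^ (m - 1) := by
        rw [← pow_succ']; congr 1; omega
      have hB : (2 : ℕ) ^ j = 2 * 2 ^ (j - 1) := by
        rw [← pow_succ']; congr 1; omega
      have hba : (2 : ℕ) ^ (j - 1) ≤ 2 ^ (m - 1) :=
        Nat.pow_le_pow_right (by norm_num) (by omega)
      have hwz : S = ((2 ^ m : ℕ) : ℤ) - 2 * (w : ℤ) := by rw [hSw]; push_cast; ring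
      rcases Int.natAbs_eq S with hcase | hcase
      · right
        have hSj : S = ((2 ^ j : ℕ) : ℤ) := by rw [hcase, hja]
        set M : ℕ := 2 ^ m with hMdef
        set Jn : ℕ := 2 ^ j with hJdef
        set A : ℕ := 2 ^ (m - 1) with hAdef
        set B : ℕ := 2 ^ (j - 1) with hBdef
        clear_value M Jn A B
        omega
      · left
        have hSj : S = -((2 ^ j : ℕ) : ℤ) := by rw [hcase, hja]
        set M : ℕ := 2 ^ m with hMdef
        set Jn : ℕ := 2 ^ j with hJdef
        set A : ℕ := 2 ^ (m - 1) with hAdef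
        set B : ℕ := 2 ^ (j - 1) with hBdef
        clear_value M Jn A B
        omega
  · -- Case A : the sum over the radical vanishes, S = 0
    push_neg at hg0
    obtain ⟨a0, ha0P, ha0g⟩ := hg0
    have ha0g1 : g a0 = 1 := zmod2_ne _ ha0g
    have hTsum : (∑ a ∈ Finset.univ.filter P, χ (g a)) = 0 := by
      have hvv : ∀ v : Fin m → ZMod 2, v + v = 0 := by
        intro v; funext i
        simp only [Pi.add_apply, Pi.zero_apply]
        rcases zmod2_cases (v i) with hv | hv <;> rw [hv] <;> decide
      have e : (∑ a ∈ Finset.univ.filter P, χ (g a)) =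
          ∑ a ∈ Finset.univ.filter P, - χ (g a) := by
        refine Finset.sum_nbij' (fun a => a0 + a) (fun a => a0 + a) ?_ ?_ ?_ ?_ ?_
        · intro a ha
          simp only [Finset.mem_filter, hPdef] at ha ⊢
          refine ⟨Finset.mem_univ _, fun x => ?_⟩
          rw [hLa, ha0P x, ha.2 x, add_zero]
        · intro a ha
          simp only [Finset.mem_filter, hPdef] at ha ⊢
          refine ⟨Finset.mem_univ _, fun x => ?_⟩
          rw [hLa, ha0P x, ha.2 x, add_zero]
        · intro a _
          show a0 + (a0 + a) = a
          rw [← add_assoc, hvv a0, zero_add]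
        · intro a _
          show a0 + (a0 + a) = a
          rw [← add_assoc, hvv a0, zero_add]
        · intro a _
          have hg2 : g (a0 + a) = 1 + g a := by
            rw [hgadd a0 a, hLsymm a a0, ha0P a, zero_add, ha0g1]
          show χ (g a) = - χ (g (a0 + a))
          rw [hg2]
          generalize g a = c
          revert c; decide
      rw [Finset.sum_neg_distrib] at e
      linarith
    have hS0 : S = 0 := by
      have h0 : S ^ 2 = 0 := by rw [hT, hTsum, mul_zero]
      exact sq_eq_zero_iff.mp h0
    left
    have hA : (2 : ℕ) ^ m = 2 * 2 ^ (m - 1) := by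
      rw [← pow_succ']; congr 1; omega
    have hwz : S = ((2 ^ m : ℕ) : ℤ) - 2 * (w : ℤ) := by rw [hSw]; push_cast; ring
    set M : ℕ := 2 ^ m with hMdef
    set A : ℕ := 2 ^ (m - 1) with hAdef
    clear_value M A
    omega

end RM2Aux

/-- Weight structure of the second-order Reed–Muller code RM(2,m): the weight
`w = |{x : f(x) = 1}|` of (the evaluation of) any polynomial `f` over
`ZMod 2` in `m` variables of total degree at most `2` is either `2^{m−1}` or
of the form `2^{m−1} ± 2^{m−1−h}` for some `0 ≤ h ≤ ⌈m/2⌉`. -/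
theorem rm2_weight_structure (m : ℕ) (hm : 1 ≤ m)
    (f : MvPolynomial (Fin m) (ZMod 2)) (hf : f.totalDegree ≤ 2) :
    (Finset.univ.filter
        (fun x : Fin m → ZMod 2 => MvPolynomial.eval x f = 1)).card =
          2 ^ (m - 1) ∨
      ∃ h : ℕ, h ≤ Nat.ceil ((m : ℚ) / 2) ∧
        ((Finset.univ.filter
            (fun x : Fin m → ZMod 2 => MvPolynomial.eval x f = 1)).card =
              2 ^ (m - 1) + 2 ^ (m - 1 - h) ∨
          (Finset.univ.filter
            (fun x : Fin m → ZMod 2 => MvPolynomial.eval x f = 1)).card =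
              2 ^ (m - 1) - 2 ^ (m - 1 - h)) :=
  RM2Aux.main_aux m hm (fun x => MvPolynomial.eval x f) (RM2Aux.key f hf)
end
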